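/- Let A ⊆ ℝ^d and h ∈ 𝒟. If P_0^h(A) = 0, then there exists f ∈ 𝒟 with f ≺ h such that P_0^f(A) < +∞. -/

import Mathlib

open Set Metric Filter Topology
open scoped ENNReal

/-- `h` is a dimension function: continuous and nondecreasing on `(0,∞)`, positive
there, and tending to `0` as `t → 0⁺`. -/
def IsDimFun (h : ℝ → ℝ) : Prop :=
  ContinuousOn h (Ioi 0) ∧ MonotoneOn h (Ioi 0) ∧ (∀ t, 0 < t → 0 < h t) ∧
    Tendsto h (𝓝[>] (0:ℝ)) (𝓝 0)

/-- `g ≺ h` : `g` is a smaller dimension than `h`, i.e. `lim_{t→0⁺} h(t)/g(t) = 0`. -/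
def DimLT (g h : ℝ → ℝ) : Prop :=
  Tendsto (fun t => h t / g t) (𝓝[>] (0:ℝ)) (𝓝 0)

/-- `h ∈ 𝒟_d`: `h` is a doubling, at most `d`-dimensional dimension function. -/
def IsDimFunD (d : ℕ) (h : ℝ → ℝ) : Prop :=
  IsDimFun h ∧ (∃ c₀ > (0:ℝ), ∀ t > (0:ℝ), t ^ d ≤ c₀ * h t) ∧
    ∃ c₁ > (0:ℝ), ∀ t > (0:ℝ), h (2 * t) ≤ c₁ * h t

/-- `P_δ^h(E)`: supremum of `∑ h(|Bᵢ|)` over countable `δ`-packings of `E`, where a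
`δ`-packing is a countable collection of pairwise disjoint open balls centered at
points of `E` with diameters (`= 2r`) less than `δ`. -/
noncomputable def packingPre (d : ℕ) (h : ℝ → ℝ) (δ : ℝ)
    (E : Set (EuclideanSpace ℝ (Fin d))) : ℝ≥0∞ :=
  ⨆ (c : ℕ → EuclideanSpace ℝ (Fin d)) (r : ℕ → ℝ) (s : Set ℕ)
    (_ : ∀ i ∈ s, c i ∈ E) (_ : ∀ i ∈ s, 0 < r i) (_ : ∀ i ∈ s, 2 * r i < δ)
    (_ : s.PairwiseDisjoint fun i => ball (c i) (r i)),
    ∑' i : s, ENNReal.ofReal (h (2 * r (i : ℕ)))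

/-- The packing premeasure `P_0^h(E) = inf_{δ>0} P_δ^h(E)`. -/
noncomputable def packingPre0 (d : ℕ) (h : ℝ → ℝ)
    (E : Set (EuclideanSpace ℝ (Fin d))) : ℝ≥0∞ :=
  ⨅ (δ : ℝ) (_ : 0 < δ), packingPre d h δ E

/-- The packing measure `𝒫^h(E)`. -/
noncomputable def packingMeasure (d : ℕ) (h : ℝ → ℝ)
    (E : Set (EuclideanSpace ℝ (Fin d))) : ℝ≥0∞ :=
  ⨅ (F : ℕ → Set (EuclideanSpace ℝ (Fin d))) (_ : E ⊆ ⋃ j, F j),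
    ∑' j, packingPre0 d h (F j)

/-- `E` has non-σ-finite `𝒫^h` measure: `E` is not a countable union of sets of
finite `𝒫^h` measure. -/
def NonSigmaFinitePacking (d : ℕ) (h : ℝ → ℝ)
    (E : Set (EuclideanSpace ℝ (Fin d))) : Prop :=
  ¬ ∃ F : ℕ → Set (EuclideanSpace ℝ (Fin d)),
      E ⊆ ⋃ j, F j ∧ ∀ j, packingMeasure d h (F j) < ⊤

/-- `A ⊆ ℝ^d` is analytic: a continuous image of `ℕ^ℕ`. -/
def IsAnalyticSet' (d : ℕ) (A : Set (EuclideanSpace ℝ (Fin d))) : Prop :=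
  ∃ φ : (ℕ → ℕ) → EuclideanSpace ℝ (Fin d), Continuous φ ∧ A = Set.range φ

/-!
Choose scales `δ k > 0` with `P_{δ k}^h(A) < 2⁻ᵏ` and `h (δ k) < 1`, and put
`f t = ∑ₖ min (h t) (2⁻ᵏ h (δ k))`. The series is dominated by a geometric one, so `f` is again a
dimension function; for fixed `N` the first `N` terms equal `h t` once `t` is small, so
`f ≥ N h` near `0` and `f ≺ h`. On the other hand
`min (h t) (2⁻ᵏ h (δ k)) ≤ 1_{t < δ k} h t + 2⁻ᵏ h t`, so summing over a `δ 0`-packing gives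
`P_{δ 0}^f(A) ≤ 2 P_{δ 0}^h(A) + ∑ₖ P_{δ k}^h(A) ≤ 4`.
-/

section MinSeries

variable {h : ℝ → ℝ} {b : ℕ → ℝ} {t : ℝ}

noncomputable def minSeries (h : ℝ → ℝ) (b : ℕ → ℝ) (t : ℝ) : ℝ := ∑' k, min (h t) (b k)

theorem Summable.const_min (hb : Summable b) (hb0 : ∀ k, 0 ≤ b k) {a : ℝ} (ha : 0 ≤ a) :
    Summable fun k => min a (b k) :=
  hb.of_nonneg_of_le (fun k => le_min ha (hb0 k)) fun _ => min_le_right _ _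

theorem isDimFun_minSeries (hh : IsDimFun h) (hb0 : ∀ k, 0 < b k) (hb : Summable b) :
    IsDimFun (minSeries h b) := by
  obtain ⟨hcont, hmono, hpos, hlim⟩ := hh
  have hsum : ∀ t, 0 < t → Summable fun k => min (h t) (b k) := fun t ht =>
    hb.const_min (fun k => (hb0 k).le) (hpos t ht).le
  refine ⟨?_, ?_, fun t ht => ?_, ?_⟩
  · refine continuousOn_tsum (fun k => hcont.inf continuousOn_const) hb fun k t ht => ?_
    rw [Real.norm_of_nonneg (le_min (hpos t ht).le (hb0 k).le)]
    exact min_le_right _ _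
  · exact fun s hs t ht hst =>
      (hsum s hs).tsum_le_tsum (fun k => min_le_min_right _ (hmono hs ht hst)) (hsum t ht)
  · exact (lt_min (hpos t ht) (hb0 0)).trans_le
      ((hsum t ht).le_tsum 0 fun k _ => le_min (hpos t ht).le (hb0 k).le)
  · unfold minSeries
    simpa using tendsto_tsum_of_dominated_convergence (f := fun t k => min (h t) (b k))
      (g := fun _ => 0) hb
      (fun k => by simpa [min_eq_left (hb0 k).le] using hlim.min (tendsto_const_nhds (x := b k)))
      (eventually_nhdsWithin_of_forall fun t ht k => by
        rw [Real.norm_of_nonneg (le_min (hpos t ht).le (hb0 k).le)]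
        exact min_le_right _ _)

theorem natCast_mul_le_minSeries (hb : Summable b) (hb0 : ∀ k, 0 ≤ b k) (ht : 0 ≤ h t) {N : ℕ}
    (hN : ∀ k < N, h t ≤ b k) : N * h t ≤ minSeries h b t :=
  calc (N * h t : ℝ) = ∑ k ∈ Finset.range N, min (h t) (b k) := by
        rw [Finset.sum_congr rfl fun k hk => min_eq_left (hN k (Finset.mem_range.1 hk)),
          Finset.sum_const, Finset.card_range, nsmul_eq_mul]
    _ ≤ minSeries h b t :=
        (hb.const_min hb0 ht).sum_le_tsum _ fun k _ => le_min ht (hb0 k)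

theorem dimLT_minSeries (hh : IsDimFun h) (hb0 : ∀ k, 0 < b k) (hb : Summable b) :
    DimLT (minSeries h b) h := by
  have hpos := hh.2.2.1
  have hf := (isDimFun_minSeries hh hb0 hb).2.2.1
  refine tendsto_order.2 ⟨fun a ha => ?_, fun a ha => ?_⟩
  · filter_upwards [self_mem_nhdsWithin] with t ht
    exact ha.trans (div_pos (hpos t ht) (hf t ht))
  · obtain ⟨N, hN⟩ := exists_nat_one_div_lt ha
    have hsmall : ∀ᶠ t in 𝓝[>] (0:ℝ), ∀ k ∈ Finset.range (N + 1), h t ≤ b k :=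
      (Finset.eventually_all _).2 fun k _ => hh.2.2.2.eventually_le_const (hb0 k)
    filter_upwards [self_mem_nhdsWithin, hsmall] with t ht hsmall
    have hlow := natCast_mul_le_minSeries hb (fun k => (hb0 k).le) (hpos t ht).le
      (N := N + 1) fun k hk => hsmall k (Finset.mem_range.2 hk)
    calc h t / minSeries h b t ≤ 1 / (N + 1 : ℕ) := by
          rw [div_le_div_iff₀ (hf t ht) (by positivity)]
          linarith
      _ < a := by simpa using hN

/-- Each term is `≤ h t` on the scales `t < δ k` and `≤ 2⁻ᵏ h t` on the others. -/
theorem ofReal_minSeries_le (hmono : MonotoneOn h (Ioi 0)) (hb : Summable b)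
    (hb0 : ∀ k, 0 ≤ b k) {δ : ℕ → ℝ} (hδ : ∀ k, 0 < δ k)
    (hbδ : ∀ k, b k ≤ (1 / 2) ^ k * h (δ k)) (ht : 0 < t) (hht : 0 ≤ h t) :
    ENNReal.ofReal (minSeries h b t) ≤
      2 * ENNReal.ofReal (h t) + ∑' k, if t < δ k then ENNReal.ofReal (h t) else 0 := by
  have hterm : ∀ k, ENNReal.ofReal (min (h t) (b k)) ≤
      ENNReal.ofReal ((1 / 2) ^ k * h t) + if t < δ k then ENNReal.ofReal (h t) else 0 := by
    intro k
    split_ifs with hlt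
    · exact (ENNReal.ofReal_le_ofReal (min_le_left _ _)).trans le_add_self
    · refine (ENNReal.ofReal_le_ofReal ?_).trans le_self_add
      calc min (h t) (b k) ≤ (1 / 2) ^ k * h (δ k) := (min_le_right _ _).trans (hbδ k)
        _ ≤ (1 / 2) ^ k * h t := by
          gcongr
          exact hmono (hδ k) ht (not_lt.1 hlt)
  rw [minSeries, ENNReal.ofReal_tsum_of_nonneg (fun k => le_min hht (hb0 k))
    (hb.const_min hb0 hht)]
  calc _ ≤ ∑' k, (ENNReal.ofReal ((1 / 2) ^ k * h t) +
        if t < δ k then ENNReal.ofReal (h t) else 0) := ENNReal.tsum_le_tsum hterm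
    _ = _ := by
      rw [ENNReal.tsum_add, ← ENNReal.ofReal_tsum_of_nonneg (fun k => by positivity)
        (summable_geometric_two.mul_right _), tsum_mul_right, tsum_geometric_two,
        ENNReal.ofReal_mul zero_le_two, ENNReal.ofReal_ofNat]

end MinSeries

section Packing

variable {d : ℕ} {h f : ℝ → ℝ} {δ η : ℝ} {E : Set (EuclideanSpace ℝ (Fin d))}
  {c : ℕ → EuclideanSpace ℝ (Fin d)} {r : ℕ → ℝ} {s : Set ℕ}

def IsPacking (E : Set (EuclideanSpace ℝ (Fin d))) (δ : ℝ) (c : ℕ → EuclideanSpace ℝ (Fin d))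
    (r : ℕ → ℝ) (s : Set ℕ) : Prop :=
  (∀ i ∈ s, c i ∈ E) ∧ (∀ i ∈ s, 0 < r i) ∧ (∀ i ∈ s, 2 * r i < δ) ∧
    s.PairwiseDisjoint fun i => ball (c i) (r i)

theorem IsPacking.tsum_le_packingPre (hp : IsPacking E δ c r s) :
    ∑' i : s, ENNReal.ofReal (h (2 * r i)) ≤ packingPre d h δ E :=
  le_iSup_of_le c <| le_iSup_of_le r <| le_iSup_of_le s <| le_iSup_of_le hp.1 <|
    le_iSup_of_le hp.2.1 <| le_iSup_of_le hp.2.2.1 <| le_iSup_of_le hp.2.2.2 le_rfl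

theorem packingPre_le {x : ℝ≥0∞}
    (H : ∀ c r s, IsPacking E δ c r s → ∑' i : s, ENNReal.ofReal (h (2 * r i)) ≤ x) :
    packingPre d h δ E ≤ x :=
  iSup_le fun c => iSup_le fun r => iSup_le fun s => iSup_le fun h1 => iSup_le fun h2 =>
    iSup_le fun h3 => iSup_le fun h4 => H c r s ⟨h1, h2, h3, h4⟩

theorem IsPacking.restrict (hp : IsPacking E δ c r s) (η : ℝ) :
    IsPacking E η c r (s ∩ {i | 2 * r i < η}) :=
  ⟨fun i hi => hp.1 i hi.1, fun i hi => hp.2.1 i hi.1, fun _ hi => hi.2,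
    hp.2.2.2.subset inter_subset_left⟩

theorem packingPre_mono (h : ℝ → ℝ) (E : Set (EuclideanSpace ℝ (Fin d))) :
    Monotone fun δ => packingPre d h δ E := fun _ _ hδ =>
  packingPre_le fun _ _ _ hp =>
    IsPacking.tsum_le_packingPre ⟨hp.1, hp.2.1, fun i hi => (hp.2.2.1 i hi).trans_le hδ, hp.2.2.2⟩

theorem IsPacking.tsum_ite_le_packingPre (hp : IsPacking E δ c r s) (η : ℝ) :
    ∑' i : s, (if 2 * r i < η then ENNReal.ofReal (h (2 * r i)) else 0) ≤
      packingPre d h η E := by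
  calc _ = ∑' i : ↥(s ∩ {i | 2 * r i < η}), ENNReal.ofReal (h (2 * r i)) := by
        rw [tsum_subtype s fun i => if 2 * r i < η then ENNReal.ofReal (h (2 * r i)) else 0,
          tsum_subtype (s ∩ _) fun i => ENNReal.ofReal (h (2 * r i)), ← indicator_indicator]
        rfl
    _ ≤ packingPre d h η E := (hp.restrict η).tsum_le_packingPre

theorem packingPre_le_of_ofReal_le {C : ℝ≥0∞} {η : ℕ → ℝ}
    (hf : ∀ t, 0 < t → t < δ → ENNReal.ofReal (f t) ≤
      C * ENNReal.ofReal (h t) + ∑' k, if t < η k then ENNReal.ofReal (h t) else 0) :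
    packingPre d f δ E ≤ C * packingPre d h δ E + ∑' k, packingPre d h (η k) E := by
  refine packingPre_le fun c r s hp => ?_
  calc ∑' i : s, ENNReal.ofReal (f (2 * r i))
      ≤ ∑' i : s, (C * ENNReal.ofReal (h (2 * r i)) +
          ∑' k, if 2 * r i < η k then ENNReal.ofReal (h (2 * r i)) else 0) :=
        ENNReal.tsum_le_tsum fun i =>
          hf _ (by linarith [hp.2.1 i i.2]) (hp.2.2.1 i i.2)
    _ = C * ∑' i : s, ENNReal.ofReal (h (2 * r i)) +
          ∑' k, ∑' i : s, if 2 * r i < η k then ENNReal.ofReal (h (2 * r i)) else 0 := by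
        rw [ENNReal.tsum_add, ENNReal.tsum_mul_left, ENNReal.tsum_comm]
    _ ≤ C * packingPre d h δ E + ∑' k, packingPre d h (η k) E := by
        gcongr with k
        · exact hp.tsum_le_packingPre
        · exact hp.tsum_ite_le_packingPre (η k)

theorem eventually_packingPre_lt (hE : packingPre0 d h E = 0) {ε : ℝ≥0∞} (hε : 0 < ε) :
    ∀ᶠ δ in 𝓝[>] (0:ℝ), packingPre d h δ E < ε := by
  rw [← hE, packingPre0] at hε
  obtain ⟨δ₀, hδ₀, hlt⟩ := by simpa only [iInf_lt_iff] using hε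
  filter_upwards [Ioo_mem_nhdsGT hδ₀] with δ hδ
  exact (packingPre_mono h E hδ.2.le).trans_lt hlt

end Packing

/-- if the `h`-prepacking measure vanishes, there is `f ≺ h` with
finite `f`-prepacking measure. -/
theorem prepacking_finite_down (d : ℕ) (h : ℝ → ℝ) (hh : IsDimFun h)
    (A : Set (EuclideanSpace ℝ (Fin d))) (hA : packingPre0 d h A = 0) :
    ∃ f : ℝ → ℝ, IsDimFun f ∧ DimLT f h ∧ packingPre0 d f A < ⊤ := by
  have ⟨_, hmono, hpos, hlim⟩ := hh
  choose δ hδ using fun k : ℕ =>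
    (((eventually_packingPre_lt hA (ENNReal.pow_pos (by simp : (0 : ℝ≥0∞) < 2⁻¹) k)).and
      (hlim.eventually_lt_const one_pos)).and self_mem_nhdsWithin).exists
  set b : ℕ → ℝ := fun k => (1 / 2) ^ k * h (δ k)
  have hb0 : ∀ k, 0 < b k := fun k => mul_pos (by positivity) (hpos _ (hδ k).2)
  have hb : Summable b := summable_geometric_two.of_nonneg_of_le (fun k => (hb0 k).le)
    fun k => mul_le_of_le_one_right (by positivity) (hδ k).1.2.le
  refine ⟨minSeries h b, isDimFun_minSeries hh hb0 hb, dimLT_minSeries hh hb0 hb, ?_⟩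
  calc packingPre0 d (minSeries h b) A ≤ packingPre d (minSeries h b) (δ 0) A :=
        iInf₂_le _ (hδ 0).2
    _ ≤ 2 * packingPre d h (δ 0) A + ∑' k, packingPre d h (δ k) A :=
        packingPre_le_of_ofReal_le fun t ht _ => ofReal_minSeries_le hmono hb
          (fun k => (hb0 k).le) (fun k => (hδ k).2) (fun _ => le_rfl) ht (hpos t ht).le
    _ ≤ 2 * 1 + ∑' k : ℕ, 2⁻¹ ^ k := by
        gcongr with k
        · simpa using (hδ 0).1.1.le
        · exact (hδ k).1.1.le
    _ < ⊤ := by simp [ENNReal.tsum_geometric]
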